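/- (One step contraction for mu = 0) Let F : R^d -> R be L-smooth and lambda-strongly convex with lambda <= L, let w* be a minimizer of F (grad F(w*) = 0), let z_1,...,z_k be i.i.d. uniform on the unit sphere, set tau = (d+k-1)/k, eta = 1/(tau*L), and let w' = w - eta * (1/k) * sum_r d * <grad F(w), z_r> * z_r. Then E[ ||w' - w*||_2^2 ] <= (1 - 2*lambda / (tau*(L + lambda))) * ||w - w*||_2^2. -/

import Mathlib

open MeasureTheory

abbrev Euc (d : ℕ) := EuclideanSpace ℝ (Fin d)

/-- The uniform (rotation-invariant) probability measure on the unit sphere in `ℝ^d`. -/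
noncomputable def uniformSphere (d : ℕ) :
    Measure (Metric.sphere (0 : Euc d) 1) :=
  ((volume : Measure (Euc d)).toSphere Set.univ)⁻¹ • (volume : Measure (Euc d)).toSphere

instance uniformSphere_finite (d : ℕ) : IsFiniteMeasure (uniformSphere d) := by
  constructor
  rw [uniformSphere, Measure.smul_apply, smul_eq_mul]
  exact lt_of_le_of_lt (ENNReal.inv_mul_le_one _) ENNReal.one_lt_top

/-!
Expanding the square, the expected squared distance after one step is
`‖w - w*‖² - 2η ⟪∇F(w), w - w*⟫ + η² E‖ĝ‖²`, where `ĝ` is the average of the `k` estimates.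
The uniform measure on the sphere is invariant under reflections, so its second moment
`∫ ⟪u, z⟫ ⟪v, z⟫` is a multiple of `⟪u, v⟫`, namely `⟪u, v⟫ / d`; hence each estimate has mean
`∇F(w)` and second moment `d ‖∇F(w)‖²`, and by independence `E‖ĝ‖² = τ ‖∇F(w)‖²`.
Since `∇F(w*) = 0`, co-coercivity of the gradient of the convex function `F - λ/2 ‖·‖²`, whose
gradient is `(L - λ)`-Lipschitz, bounds `⟪∇F(w), w - w*⟫` from below and yields the factor.
-/

open Set Metric ProbabilityTheory
open scoped Pointwise

section Sphere

variable {E : Type*} [NormedAddCommGroup E] [InnerProductSpace ℝ E]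

namespace LinearIsometryEquiv

def restrictSphere (e : E ≃ₗᵢ[ℝ] E) : sphere (0 : E) 1 → sphere (0 : E) 1 :=
  fun z => ⟨e z, by simp⟩

@[simp] lemma coe_restrictSphere (e : E ≃ₗᵢ[ℝ] E) (z : sphere (0 : E) 1) :
    (e.restrictSphere z : E) = e z := rfl

lemma continuous_restrictSphere (e : E ≃ₗᵢ[ℝ] E) : Continuous e.restrictSphere :=
  (e.continuous.comp continuous_subtype_val).subtype_mk _

end LinearIsometryEquiv

noncomputable def zeroOrderEstimate (g : E) (z : sphere (0 : E) 1) : E :=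
  ((Module.finrank ℝ E : ℝ) * inner ℝ g (z : E)) • (z : E)

variable [MeasurableSpace E]

def IsIsometryInvariant (σ : Measure (sphere (0 : E) 1)) : Prop :=
  ∀ e : E ≃ₗᵢ[ℝ] E, σ.map e.restrictSphere = σ

lemma finrank_pos_of_isProbabilityMeasure [FiniteDimensional ℝ E]
    (σ : Measure (sphere (0 : E) 1)) [IsProbabilityMeasure σ] : 0 < Module.finrank ℝ E := by
  obtain ⟨z⟩ := nonempty_of_isProbabilityMeasure σ
  have : Nontrivial E := ⟨⟨z, 0, ne_zero_of_mem_unit_sphere z⟩⟩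
  exact Module.finrank_pos

variable [BorelSpace E]

theorem MeasureTheory.Measure.toSphere_map_restrictSphere (μ : Measure E) {e : E ≃ₗᵢ[ℝ] E}
    (he : MeasurePreserving e μ μ) : μ.toSphere.map e.restrictSphere = μ.toSphere := by
  have hm := e.continuous_restrictSphere.measurable
  ext s hs
  have hcone : Ioo (0 : ℝ) 1 • ((↑) '' (e.restrictSphere ⁻¹' s) : Set E)
      = e ⁻¹' (Ioo (0 : ℝ) 1 • ((↑) '' s)) := by
    ext x
    simp only [mem_smul, mem_image, mem_preimage]
    constructor
    · rintro ⟨a, ha, _, ⟨z, hz, rfl⟩, rfl⟩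
      exact ⟨a, ha, _, ⟨_, hz, rfl⟩, by simp⟩
    · rintro ⟨a, ha, _, ⟨y, hy, rfl⟩, hx⟩
      have hy' : e.restrictSphere (e.symm.restrictSphere y) = y := Subtype.ext (by simp)
      refine ⟨a, ha, _, ⟨e.symm.restrictSphere y, by rwa [hy'], rfl⟩, e.injective ?_⟩
      simp [hx]
  have he' : MeasurePreserving e.toMeasurableEquiv μ μ := he
  rw [Measure.map_apply hm hs, μ.toSphere_apply' hs, μ.toSphere_apply' (hm hs), hcone]
  exact congrArg _ (he'.measure_preimage_equiv _)

section SphereMoments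

variable [FiniteDimensional ℝ E] {σ : Measure (sphere (0 : E) 1)}

lemma integrable_inner_mul_inner [IsFiniteMeasure σ] (u v : E) :
    Integrable (fun z : sphere (0 : E) 1 => inner ℝ u (z : E) * inner ℝ v (z : E)) σ :=
  Continuous.integrable_of_hasCompactSupport (by fun_prop) (.of_compactSpace _)

lemma integral_inner_sq_eq_of_norm_eq (hσ : IsIsometryInvariant σ)
    {u v : E} (h : ‖u‖ = ‖v‖) :
    ∫ z, inner ℝ u (z : E) ^ 2 ∂σ = ∫ z, inner ℝ v (z : E) ^ 2 ∂σ := by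
  set R := (ℝ ∙ (u - v))ᗮ.reflection
  have hR : ∀ z : sphere (0 : E) 1,
      inner ℝ v (z : E) = inner ℝ u (R.symm.restrictSphere z : E) := by
    intro z
    rw [← Submodule.reflection_sub h, LinearIsometryEquiv.inner_map_eq_flip]
    rfl
  simp_rw [hR]
  rw [← integral_map (f := fun y : sphere (0 : E) 1 => inner ℝ u (y : E) ^ 2)
    R.symm.continuous_restrictSphere.aemeasurable (by fun_prop), hσ]

lemma integral_inner_sq [IsProbabilityMeasure σ] (hσ : IsIsometryInvariant σ) (u : E) :
    ∫ z, inner ℝ u (z : E) ^ 2 ∂σ = ‖u‖ ^ 2 / Module.finrank ℝ E := by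
  set b := stdOrthonormalBasis ℝ E
  have hb : ∀ i,
      ∫ z, inner ℝ u (z : E) ^ 2 ∂σ = ‖u‖ ^ 2 * ∫ z, inner ℝ (b i) (z : E) ^ 2 ∂σ := by
    intro i
    rw [integral_inner_sq_eq_of_norm_eq hσ (v := ‖u‖ • b i) (by simp [norm_smul]),
      ← integral_const_mul]
    simp_rw [real_inner_smul_left, mul_pow]
  have hsum : ∑ i, ∫ z, inner ℝ (b i) (z : E) ^ 2 ∂σ = 1 := by
    rw [← integral_finsetSum _ fun i _ => by
      simpa [sq] using integrable_inner_mul_inner (σ := σ) (b i) (b i)]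
    simp [b.sum_sq_inner_right, norm_eq_of_mem_sphere]
  rw [eq_div_iff (Nat.cast_ne_zero.2 (finrank_pos_of_isProbabilityMeasure σ).ne')]
  calc (∫ z, inner ℝ u (z : E) ^ 2 ∂σ) * Module.finrank ℝ E
      = ∑ i, ‖u‖ ^ 2 * ∫ z, inner ℝ (b i) (z : E) ^ 2 ∂σ := by
        simp [← hb, mul_comm]
    _ = ‖u‖ ^ 2 := by rw [← Finset.mul_sum, hsum, mul_one]

lemma integral_inner_mul_inner [IsProbabilityMeasure σ]
    (hσ : IsIsometryInvariant σ) (u v : E) :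
    ∫ z, inner ℝ u (z : E) * inner ℝ v (z : E) ∂σ = inner ℝ u v / Module.finrank ℝ E := by
  have hpol : ∀ z : E,
      inner ℝ u z * inner ℝ v z = (inner ℝ (u + v) z ^ 2 - inner ℝ (u - v) z ^ 2) / 4 := by
    intro z
    rw [inner_add_left, inner_sub_left]
    ring
  simp_rw [hpol]
  rw [integral_div, integral_sub, integral_inner_sq hσ, integral_inner_sq hσ]
  · rw [norm_add_sq_real, norm_sub_sq_real]
    ring
  all_goals simpa [sq] using integrable_inner_mul_inner (σ := σ) _ _

lemma memLp_zeroOrderEstimate [IsFiniteMeasure σ] (g : E) : MemLp (zeroOrderEstimate g) 2 σ :=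
  Continuous.memLp_of_hasCompactSupport (by unfold zeroOrderEstimate; fun_prop)
    (.of_compactSpace _)

lemma integral_zeroOrderEstimate [IsProbabilityMeasure σ] (hσ : IsIsometryInvariant σ) (g : E) :
    ∫ z, zeroOrderEstimate g z ∂σ = g := by
  refine ext_inner_left ℝ fun v => ?_
  rw [← integral_inner ((memLp_zeroOrderEstimate g).integrable one_le_two)]
  have hd : (Module.finrank ℝ E : ℝ) ≠ 0 :=
    Nat.cast_ne_zero.2 (finrank_pos_of_isProbabilityMeasure σ).ne'
  simp_rw [zeroOrderEstimate, real_inner_smul_right, mul_assoc]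
  rw [integral_const_mul, integral_inner_mul_inner hσ, real_inner_comm, mul_div_cancel₀ _ hd]

lemma integral_norm_zeroOrderEstimate_sq [IsProbabilityMeasure σ] (hσ : IsIsometryInvariant σ)
    (g : E) :
    ∫ z, ‖zeroOrderEstimate g z‖ ^ 2 ∂σ = Module.finrank ℝ E * ‖g‖ ^ 2 := by
  have hd : (Module.finrank ℝ E : ℝ) ≠ 0 :=
    Nat.cast_ne_zero.2 (finrank_pos_of_isProbabilityMeasure σ).ne'
  simp_rw [zeroOrderEstimate, norm_smul, norm_eq_of_mem_sphere, mul_one, Real.norm_eq_abs, sq_abs,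
    mul_pow]
  rw [integral_const_mul, integral_inner_sq hσ]
  field_simp

end SphereMoments

end Sphere

lemma isProbabilityMeasure_uniformSphere {d : ℕ} (hd : 0 < d) :
    IsProbabilityMeasure (uniformSphere d) := by
  have : Nonempty (Fin d) := ⟨⟨0, hd⟩⟩
  constructor
  rw [uniformSphere, Measure.smul_apply, smul_eq_mul]
  exact ENNReal.inv_mul_cancel (Measure.measure_univ_ne_zero.2 (Measure.toSphere_ne_zero _))
    (measure_ne_top _ _)

lemma isIsometryInvariant_uniformSphere (d : ℕ) : IsIsometryInvariant (uniformSphere d) := by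
  intro e
  rw [uniformSphere, Measure.map_smul, Measure.toSphere_map_restrictSphere _ e.measurePreserving]

section SampleMean

variable {Ω E : Type*} [MeasurableSpace Ω] {ν : Measure Ω}
  [NormedAddCommGroup E] [InnerProductSpace ℝ E]

lemma MeasureTheory.MemLp.integrable_inner {f g : Ω → E} (hf : MemLp f 2 ν) (hg : MemLp g 2 ν) :
    Integrable (fun ω => inner ℝ (f ω) (g ω)) ν :=
  (hf.norm.integrable_mul hg.norm).mono' (hf.1.inner hg.1)
    (ae_of_all _ fun ω => norm_inner_le_norm (f ω) (g ω))

noncomputable def sampleMean (Y : Ω → E) (k : ℕ) (z : Fin k → Ω) : E :=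
  (k : ℝ)⁻¹ • ∑ r, Y (z r)

variable [IsProbabilityMeasure ν] {Y : Ω → E} {k : ℕ}

lemma memLp_sampleMean {p : ENNReal} (hY : MemLp Y p ν) :
    MemLp (sampleMean Y k) p (Measure.pi fun _ => ν) :=
  (memLp_finsetSum _ fun r _ => hY.comp_measurePreserving (measurePreserving_eval _ r)).const_smul _

lemma integral_sampleMean (hY : Integrable Y ν) (hk : 0 < k) :
    ∫ z, sampleMean Y k z ∂(Measure.pi fun _ => ν) = ∫ ω, Y ω ∂ν := by
  simp only [sampleMean]
  rw [integral_smul, integral_finsetSum _ fun r _ => integrable_comp_eval hY]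
  simp only [integral_comp_eval (μ := fun _ : Fin k => ν) hY.aestronglyMeasurable,
    Finset.sum_const, Finset.card_univ, Fintype.card_fin, ← Nat.cast_smul_eq_nsmul ℝ, smul_smul]
  rw [inv_mul_cancel₀ (Nat.cast_ne_zero.2 hk.ne'), one_smul]

variable [CompleteSpace E]

lemma integral_inner_comp_eval (hY : MemLp Y 2 ν) (r s : Fin k) :
    ∫ z, inner ℝ (Y (z r)) (Y (z s)) ∂(Measure.pi fun _ => ν)
      = if r = s then ∫ ω, ‖Y ω‖ ^ 2 ∂ν else ‖∫ ω, Y ω ∂ν‖ ^ 2 := by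
  split_ifs with hrs
  · subst hrs
    simp_rw [real_inner_self_eq_norm_sq]
    exact integral_comp_eval (μ := fun _ : Fin k => ν) (f := fun ω => ‖Y ω‖ ^ 2) (hY.1.norm.pow 2)
  · have hind := (iIndepFun_pi (μ := fun _ : Fin k => ν) (X := fun _ => id)
      fun _ => aemeasurable_id).indepFun hrs
    have hint : ∀ t : Fin k, Integrable Y ((Measure.pi fun _ => ν).map (fun z => id (z t))) :=
      fun t => by
        change Integrable Y ((Measure.pi fun _ => ν).map (Function.eval t))
        rw [(measurePreserving_eval _ t).map_eq]
        exact hY.integrable one_le_two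
    have := hind.integral_bilin_comp_comp (measurable_pi_apply r).aemeasurable
      (measurable_pi_apply s).aemeasurable (hint r) (hint s) (innerSL ℝ)
    simp only [id, integral_comp_eval (μ := fun _ : Fin k => ν) hY.1] at this
    exact this.trans (real_inner_self_eq_norm_sq _)

lemma integral_norm_sampleMean_sq (hY : MemLp Y 2 ν) (hk : 0 < k) :
    ∫ z, ‖sampleMean Y k z‖ ^ 2 ∂(Measure.pi fun _ => ν)
      = (k : ℝ)⁻¹ * ∫ ω, ‖Y ω‖ ^ 2 ∂ν + (1 - (k : ℝ)⁻¹) * ‖∫ ω, Y ω ∂ν‖ ^ 2 := by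
  have hexp : ∀ z : Fin k → Ω, ‖sampleMean Y k z‖ ^ 2
      = (k : ℝ)⁻¹ ^ 2 * ∑ r, ∑ s, inner ℝ (Y (z r)) (Y (z s)) := by
    intro z
    rw [sampleMean, ← real_inner_self_eq_norm_sq, real_inner_smul_left, real_inner_smul_right,
      sum_inner]
    simp_rw [inner_sum]
    ring
  have hint : ∀ r s : Fin k, Integrable (fun z : Fin k → Ω => inner ℝ (Y (z r)) (Y (z s)))
      (Measure.pi fun _ => ν) := fun r s =>
    (hY.comp_measurePreserving (measurePreserving_eval _ r)).integrable_inner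
      (hY.comp_measurePreserving (measurePreserving_eval _ s))
  have hrow : ∀ r : Fin k, ∑ s, (if r = s then ∫ ω, ‖Y ω‖ ^ 2 ∂ν else ‖∫ ω, Y ω ∂ν‖ ^ 2)
      = (∫ ω, ‖Y ω‖ ^ 2 ∂ν - ‖∫ ω, Y ω ∂ν‖ ^ 2) + k * ‖∫ ω, Y ω ∂ν‖ ^ 2 := by
    intro r
    calc _ = ∑ s, ((if r = s then ∫ ω, ‖Y ω‖ ^ 2 ∂ν - ‖∫ ω, Y ω ∂ν‖ ^ 2 else 0)
          + ‖∫ ω, Y ω ∂ν‖ ^ 2) := Finset.sum_congr rfl fun s _ => by split_ifs <;> ring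
      _ = _ := by simp [Finset.sum_add_distrib]
  simp_rw [hexp]
  rw [integral_const_mul,
    integral_finsetSum _ fun r _ => integrable_finsetSum _ fun s _ => hint r s]
  simp_rw [integral_finsetSum _ fun s _ => hint _ s, integral_inner_comp_eval hY, hrow]
  have hk' : (k : ℝ) ≠ 0 := Nat.cast_ne_zero.2 hk.ne'
  simp only [Finset.sum_const, Finset.card_univ, Fintype.card_fin, nsmul_eq_mul]
  field_simp
  ring

lemma integral_norm_sub_smul_sq (hY : MemLp Y 2 ν) (a : E) (c : ℝ) :
    ∫ ω, ‖a - c • Y ω‖ ^ 2 ∂ν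
      = ‖a‖ ^ 2 - 2 * c * inner ℝ a (∫ ω, Y ω ∂ν) + c ^ 2 * ∫ ω, ‖Y ω‖ ^ 2 ∂ν := by
  have hint : Integrable Y ν := hY.integrable one_le_two
  have hsq : Integrable (fun ω => ‖Y ω‖ ^ 2) ν := (memLp_two_iff_integrable_sq_norm hY.1).1 hY
  simp_rw [norm_sub_sq_real, real_inner_smul_right, norm_smul, mul_pow, Real.norm_eq_abs, sq_abs]
  have hcross : Integrable (fun ω => 2 * (c * inner ℝ a (Y ω))) ν :=
    ((hint.const_inner a).const_mul c).const_mul 2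
  rw [integral_add ?_ (hsq.const_mul _), integral_sub (integrable_const _) hcross, integral_const,
    integral_const_mul, integral_const_mul, integral_const_mul, integral_inner hint]
  · simp [mul_assoc]
  · exact (integrable_const _).sub hcross

end SampleMean

section MinibatchEstimate

variable {E : Type*} [NormedAddCommGroup E] [InnerProductSpace ℝ E] [FiniteDimensional ℝ E]
  [MeasurableSpace E] [BorelSpace E] {σ : Measure (sphere (0 : E) 1)} [IsProbabilityMeasure σ]
  {k : ℕ}

lemma integral_sampleMean_zeroOrderEstimate (hσ : IsIsometryInvariant σ) (hk : 0 < k) (g : E) :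
    ∫ z, sampleMean (zeroOrderEstimate g) k z ∂(Measure.pi fun _ => σ) = g := by
  rw [integral_sampleMean ((memLp_zeroOrderEstimate g).integrable one_le_two) hk,
    integral_zeroOrderEstimate hσ]

lemma integral_norm_sampleMean_zeroOrderEstimate_sq (hσ : IsIsometryInvariant σ) (hk : 0 < k)
    (g : E) :
    ∫ z, ‖sampleMean (zeroOrderEstimate g) k z‖ ^ 2 ∂(Measure.pi fun _ => σ)
      = ((Module.finrank ℝ E + k - 1) / k) * ‖g‖ ^ 2 := by
  rw [integral_norm_sampleMean_sq (memLp_zeroOrderEstimate g) hk, integral_zeroOrderEstimate hσ,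
    integral_norm_zeroOrderEstimate_sq hσ]
  have hk' : (k : ℝ) ≠ 0 := Nat.cast_ne_zero.2 hk.ne'
  field_simp
  ring

end MinibatchEstimate

section Cocoercivity

variable {E : Type*} [NormedAddCommGroup E] [InnerProductSpace ℝ E]

theorem norm_sub_sq_le_mul_inner_of_quadratic_bounds {φ : E → ℝ} {G : E → E} {M : ℝ}
    (hM : 0 ≤ M) (hlow : ∀ x y, φ x + inner ℝ (G x) (y - x) ≤ φ y)
    (hup : ∀ x y, φ y ≤ φ x + inner ℝ (G x) (y - x) + M / 2 * ‖y - x‖ ^ 2) (x y : E) :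
    ‖G x - G y‖ ^ 2 ≤ M * inner ℝ (G x - G y) (x - y) := by
  have hstep : ∀ a b (t : ℝ),
      φ a + inner ℝ (G a) (b - a) + (t - M * t ^ 2 / 2) * ‖G a - G b‖ ^ 2 ≤ φ b := by
    intro a b t
    set z := b - t • (G b - G a)
    have hza : z - a = (b - a) - t • (G b - G a) := by simp only [z]; abel
    have hzb : z - b = -(t • (G b - G a)) := by simp only [z]; abel
    have h1 := hlow a z
    have h2 := hup b z
    rw [hza, inner_sub_right, real_inner_smul_right] at h1
    rw [hzb, inner_neg_right, real_inner_smul_right, norm_neg, norm_smul, mul_pow,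
      Real.norm_eq_abs, sq_abs, norm_sub_rev] at h2
    have hD : t * inner ℝ (G a) (G b - G a) - t * inner ℝ (G b) (G b - G a)
        = -(t * ‖G a - G b‖ ^ 2) := by
      rw [← mul_sub, ← inner_sub_left, ← neg_sub (G b), inner_neg_left,
        real_inner_self_eq_norm_sq, norm_neg, norm_sub_rev, mul_neg]
    linarith
  have hsum : ∀ t : ℝ, (2 * t - M * t ^ 2) * ‖G x - G y‖ ^ 2 ≤ inner ℝ (G x - G y) (x - y) := by
    intro t
    have h1 := hstep x y t
    have h2 := hstep y x t
    rw [norm_sub_rev (G y)] at h2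
    have : inner ℝ (G x) (y - x) + inner ℝ (G y) (x - y) = -inner ℝ (G x - G y) (x - y) := by
      rw [inner_sub_left, ← neg_sub x y, inner_neg_right]
      ring
    linarith
  -- optimise over `t`: take `t = 1 / M`, or let `t → ∞` when `M = 0`
  rcases hM.eq_or_lt with rfl | hM
  · by_contra! hpos
    rw [zero_mul] at hpos
    set t := (inner ℝ (G x - G y) (x - y) + 1) / (2 * ‖G x - G y‖ ^ 2)
    have ht : 2 * t * ‖G x - G y‖ ^ 2 = inner ℝ (G x - G y) (x - y) + 1 := by
      have hN : ‖G x - G y‖ ≠ 0 := fun h => by simp [h] at hpos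
      simp only [t]
      field_simp
    linarith [hsum t]
  · have := hsum M⁻¹
    field_simp at this
    linarith

variable [CompleteSpace E] {F : E → ℝ} {L : ℝ}

lemma hasDerivAt_comp_line (hF : Differentiable ℝ F) (x v : E) (t : ℝ) :
    HasDerivAt (fun t : ℝ => F (x + t • v)) (inner ℝ (gradient F (x + t • v)) v) t := by
  have hline : HasDerivAt (fun t : ℝ => x + t • v) v t := by
    simpa using ((hasDerivAt_id t).smul_const v).const_add x
  rw [inner_gradient_left]
  exact (hF _).hasFDerivAt.comp_hasDerivAt t hline

theorem le_add_inner_gradient_add_of_lipschitz (hF : Differentiable ℝ F)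
    (hsmooth : ∀ x y, ‖gradient F x - gradient F y‖ ≤ L * ‖x - y‖) (x y : E) :
    F y ≤ F x + inner ℝ (gradient F x) (y - x) + L / 2 * ‖y - x‖ ^ 2 := by
  set v := y - x
  set g : ℝ → ℝ := fun t => L / 2 * ‖v‖ ^ 2 * t ^ 2 + t * inner ℝ (gradient F x) v - F (x + t • v)
  have hg : ∀ t, HasDerivAt g (L * ‖v‖ ^ 2 * t + inner ℝ (gradient F x) v
      - inner ℝ (gradient F (x + t • v)) v) t := fun t => by
    have := (((hasDerivAt_pow 2 t).const_mul (L / 2 * ‖v‖ ^ 2)).fun_add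
      ((hasDerivAt_id' t).mul_const (inner ℝ (gradient F x) v))).fun_sub
      (hasDerivAt_comp_line hF x v t)
    exact this.congr_deriv (by norm_num; ring)
  have hmono : MonotoneOn g (Ici 0) := by
    refine monotoneOn_of_hasDerivWithinAt_nonneg (convex_Ici 0)
      (fun t _ => (hg t).continuousAt.continuousWithinAt) (fun t _ => (hg t).hasDerivWithinAt) ?_
    intro t ht
    rw [interior_Ici, mem_Ioi] at ht
    have hlip : inner ℝ (gradient F (x + t • v) - gradient F x) v ≤ L * t * ‖v‖ ^ 2 :=
      calc _ ≤ ‖gradient F (x + t • v) - gradient F x‖ * ‖v‖ := real_inner_le_norm _ _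
        _ ≤ L * ‖(x + t • v) - x‖ * ‖v‖ := by gcongr; exact hsmooth _ _
        _ = L * t * ‖v‖ ^ 2 := by
          rw [add_sub_cancel_left, norm_smul, Real.norm_of_nonneg ht.le]
          ring
    rw [inner_sub_left] at hlip
    linarith
  have h01 := hmono self_mem_Ici (zero_le_one' ℝ) zero_le_one
  simp only [g, zero_smul, add_zero, one_smul, one_pow, mul_one, one_mul, zero_mul, mul_zero,
    zero_pow two_ne_zero, v, add_sub_cancel] at h01
  linarith

theorem sq_norm_gradient_sub_add_le_mul_inner {lam : ℝ} (hF : Differentiable ℝ F)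
    (hsmooth : ∀ x y, ‖gradient F x - gradient F y‖ ≤ L * ‖x - y‖)
    (hconv : ∀ x y, F y ≥ F x + inner ℝ (gradient F x) (y - x) + lam / 2 * ‖y - x‖ ^ 2)
    (hlamL : lam ≤ L) (x y : E) :
    ‖gradient F x - gradient F y‖ ^ 2 + lam * L * ‖x - y‖ ^ 2
      ≤ (L + lam) * inner ℝ (gradient F x - gradient F y) (x - y) := by
  have hid : ∀ x y : E, ‖y - x‖ ^ 2 = ‖y‖ ^ 2 - ‖x‖ ^ 2 - 2 * inner ℝ x (y - x) := fun x y => by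
    rw [norm_sub_sq_real, inner_sub_right, real_inner_self_eq_norm_sq, real_inner_comm]
    ring
  have key := norm_sub_sq_le_mul_inner_of_quadratic_bounds
    (φ := fun x => F x - lam / 2 * ‖x‖ ^ 2) (G := fun x => gradient F x - lam • x)
    (sub_nonneg.2 hlamL) (fun x y => ?_) (fun x y => ?_) x y
  · have hG : gradient F x - lam • x - (gradient F y - lam • y)
        = (gradient F x - gradient F y) - lam • (x - y) := by
      rw [smul_sub]; abel
    rw [hG] at key
    set D := gradient F x - gradient F y
    set e := x - y
    clear_value D e
    rw [norm_sub_sq_real, inner_sub_left, real_inner_smul_left, real_inner_smul_right,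
      norm_smul, mul_pow, Real.norm_eq_abs, sq_abs, real_inner_self_eq_norm_sq] at key
    linear_combination key
  · simp only [inner_sub_left, real_inner_smul_left]
    linear_combination hconv x y - lam / 2 * hid x y
  · simp only [inner_sub_left, real_inner_smul_left]
    linear_combination le_add_inner_gradient_add_of_lipschitz hF hsmooth x y
      + lam / 2 * hid x y

end Cocoercivity

lemma step_le_of_cocoercive {p q t τ L lam : ℝ} (hτ : 0 < τ) (hL : 0 < L) (hlam : 0 < lam)
    (hlamL : lam ≤ L) (hq : 0 ≤ q) (hco : q + lam * L * p ≤ (L + lam) * t) :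
    p - 2 * (1 / (τ * L)) * t + (1 / (τ * L)) ^ 2 * (τ * q)
      ≤ (1 - 2 * lam / (τ * (L + lam))) * p := by
  have hLl : 0 < L + lam := by linarith
  have hcross : q / L + 2 * lam * L * p / (L + lam) ≤ 2 * t := by
    rw [div_add_div _ _ hL.ne' hLl.ne', div_le_iff₀ (by positivity)]
    nlinarith [mul_le_mul_of_nonneg_left hco (by positivity : (0 : ℝ) ≤ 2 * L),
      mul_nonneg hq (sub_nonneg.2 hlamL)]
  calc p - 2 * (1 / (τ * L)) * t + (1 / (τ * L)) ^ 2 * (τ * q)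
      = p - 1 / (τ * L) * (2 * t - q / L) := by field_simp; ring
    _ ≤ p - 1 / (τ * L) * (2 * lam * L * p / (L + lam)) := by gcongr; linarith
    _ = (1 - 2 * lam / (τ * (L + lam))) * p := by field_simp

/-- One-step contraction of the zero-order update with `μ = 0`. -/
theorem stmt15 (d k : ℕ) (hd : 0 < d) (hk : 0 < k) (F : Euc d → ℝ) (L lam : ℝ)
    (hL : 0 < L) (hlam : 0 < lam) (hlamL : lam ≤ L) (hF : Differentiable ℝ F)
    (hsmooth : ∀ x y : Euc d, ‖gradient F x - gradient F y‖ ≤ L * ‖x - y‖)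
    (hconv : ∀ x y : Euc d,
      F y ≥ F x + (inner ℝ (gradient F x) (y - x) : ℝ) + lam / 2 * ‖y - x‖ ^ 2)
    (wstar w : Euc d) (hmin : gradient F wstar = 0) :
    (∫ z : Fin k → Metric.sphere (0 : Euc d) 1,
        ‖(w - (1 / (((d : ℝ) + k - 1) / k * L)) •
            ((k : ℝ)⁻¹ • ∑ r : Fin k,
              ((d : ℝ) * (inner ℝ (gradient F w) (z r : Euc d) : ℝ)) • (z r : Euc d)))
          - wstar‖ ^ 2
        ∂(Measure.pi fun _ : Fin k => uniformSphere d))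
      ≤ (1 - 2 * lam / ((((d : ℝ) + k - 1) / k) * (L + lam))) * ‖w - wstar‖ ^ 2 := by
  have := isProbabilityMeasure_uniformSphere hd
  have hinv := isIsometryInvariant_uniformSphere d
  set η := 1 / (((d : ℝ) + k - 1) / k * L)
  have hupdate : ∀ z : Fin k → sphere (0 : Euc d) 1,
      (w - η • ((k : ℝ)⁻¹ • ∑ r, ((d : ℝ) * inner ℝ (gradient F w) (z r : Euc d)) • (z r : Euc d)))
        - wstar = (w - wstar) - η • sampleMean (zeroOrderEstimate (gradient F w)) k z := by
    intro z
    simp only [sampleMean, zeroOrderEstimate, finrank_euclideanSpace_fin]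
    abel
  have hco := sq_norm_gradient_sub_add_le_mul_inner hF hsmooth hconv hlamL w wstar
  rw [hmin, sub_zero] at hco
  simp_rw [hupdate]
  rw [integral_norm_sub_smul_sq (memLp_sampleMean (memLp_zeroOrderEstimate _)),
    integral_sampleMean_zeroOrderEstimate hinv hk,
    integral_norm_sampleMean_zeroOrderEstimate_sq hinv hk, finrank_euclideanSpace_fin,
    real_inner_comm]
  have hτ : 0 < ((d : ℝ) + k - 1) / k := by
    have hk1 : (1 : ℝ) ≤ k := Nat.one_le_cast.2 hk
    have hd0 : (0 : ℝ) < d := Nat.cast_pos.2 hd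
    exact div_pos (by linarith) (by linarith)
  exact step_le_of_cocoercive hτ hL hlam hlamL (sq_nonneg _) hco
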